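/- Let M be a contraction on a Banach space X and P a projection with ‖M^n − P‖_{X→X} ≤ δ^n for some δ ∈ (0,1) and all n ∈ ℕ. Let V(t,s) be a contractive C₀-evolution system satisfying the asymptotic Zeno condition ‖P V(t,s)(1−P)‖, ‖(1−P) V(t,s) P‖ ≤ (t−s)b. Then for every x ∈ X and the equidistant partition s_j = jt/n: ‖∏_{j=1}^n M V(s_j,s_{j-1}) x − ∏_{j=1}^n P V(s_j,s_{j-1}) P x‖_X ≤ (δ^n + tb/n + (1/n)·(tb(2+tb)(δ−δ^n)/(1−δ))·e^{2b}) ‖x‖_X. -/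

import Mathlib

/-!
Split each step as `M w = P w P + P w (1 - P) + (M - P) w`. Since `P (M - P) = 0 = (M - P) P`,
the product `∏ M wⱼ` leaves the range of `P` only through a block `(1 - P) w P` or `P w (1 - P)`,
each of norm at most `c = tb/n`, and inside the kernel of `P` every step contracts by
`‖M - P‖ ≤ δ`. Summing over the step where a trajectory leaves the range of `P` and over the
length of its excursion produces the geometric sums `∑ δᵏ`; the trajectory that enters the kernel
at the first step and never returns gives `δⁿ`. The identities `P M = P = M P` and `‖P‖ ≤ 1` are
limits of `‖Mⁿ - P‖ ≤ δⁿ → 0`.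
-/

open Set

variable {X : Type*} [NormedAddCommGroup X] [NormedSpace ℝ X] [CompleteSpace X]

def IsEvolutionSystem (T : ℝ → ℝ → X →L[ℝ] X) (T₀ : ℝ) : Prop :=
  (∀ t, t ∈ Icc 0 T₀ → T t t = 1) ∧
    (∀ t r s, 0 ≤ s → s ≤ r → r ≤ t → t ≤ T₀ → T t r ∘L T r s = T t s) ∧
    ∀ x : X, ContinuousOn (fun p : ℝ × ℝ => T p.1 p.2 x)
      {p : ℝ × ℝ | 0 ≤ p.2 ∧ p.2 ≤ p.1 ∧ p.1 ≤ T₀}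

def IsContractionEvolutionSystem (T : ℝ → ℝ → X →L[ℝ] X) (T₀ : ℝ) : Prop :=
  IsEvolutionSystem T T₀ ∧ ∀ t s, 0 ≤ s → s ≤ t → t ≤ T₀ → ‖T t s‖ ≤ 1

open Finset

theorem le_of_forall_le_add_mul_pow {x y C δ : ℝ} (hδ0 : 0 ≤ δ) (hδ1 : δ < 1)
    (h : ∀ k : ℕ, x ≤ y + C * δ ^ k) : x ≤ y :=
  ge_of_tendsto' (by simpa using
    ((tendsto_pow_atTop_nhds_zero_of_lt_one hδ0 hδ1).const_mul C).const_add y) h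

section SeminormedRing

variable {R : Type*} [SeminormedRing R]

/-- `timeOrderedProd f [w₁, …, wₙ] = f wₙ * ⋯ * f w₁`, the order of the paper's products. -/
def timeOrderedProd (f : R → R) (ws : List R) : R :=
  (ws.map f).reverse.prod

@[simp]
theorem timeOrderedProd_nil (f : R → R) : timeOrderedProd f [] = 1 := rfl

@[simp]
theorem timeOrderedProd_cons (f : R → R) (w : R) (ws : List R) :
    timeOrderedProd f (w :: ws) = timeOrderedProd f ws * f w := by
  simp [timeOrderedProd]

theorem norm_mul_le_of_norm_le_one {a : R} (ha : ‖a‖ ≤ 1) (r : R) : ‖a * r‖ ≤ ‖r‖ :=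
  (norm_mul_le a r).trans (mul_le_of_le_one_left (norm_nonneg r) ha)

theorem norm_mul_le_one {a b : R} (ha : ‖a‖ ≤ 1) (hb : ‖b‖ ≤ 1) : ‖a * b‖ ≤ 1 :=
  (norm_mul_le_of_norm_le_one ha b).trans hb

theorem norm_timeOrderedProd_mul_le {f : R → R} :
    ∀ {ws : List R}, (∀ w ∈ ws, ‖f w‖ ≤ 1) → ∀ r : R, ‖timeOrderedProd f ws * r‖ ≤ ‖r‖
  | [], _, r => by simp
  | w :: ws, hws, r => by
    obtain ⟨hw, hws⟩ := List.forall_mem_cons.1 hws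
    rw [timeOrderedProd_cons, mul_assoc]
    exact (norm_timeOrderedProd_mul_le hws _).trans (norm_mul_le_of_norm_le_one hw r)

/-- A step `w = V(sⱼ, sⱼ₋₁)` under the asymptotic Zeno condition, with `c = (sⱼ - sⱼ₋₁) b`. -/
def IsZenoStep (P : R) (c : ℝ) (w : R) : Prop :=
  ‖w‖ ≤ 1 ∧ ‖P * w * (1 - P)‖ ≤ c ∧ ‖(1 - P) * w * P‖ ≤ c

theorem IsZenoStep.nonneg {P w : R} {c : ℝ} (hw : IsZenoStep P c w) : 0 ≤ c :=
  (norm_nonneg _).trans hw.2.1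

/-- What the estimate uses of `‖Mⁿ - P‖ ≤ δⁿ`, see `HasSpectralGap.of_norm_pow_sub_le`. -/
structure HasSpectralGap (M P : R) (δ : ℝ) : Prop where
  proj_mul_proj : P * P = P
  proj_mul : P * M = P
  mul_proj : M * P = P
  norm_le_one : ‖M‖ ≤ 1
  norm_proj_le_one : ‖P‖ ≤ 1
  norm_sub_proj_le : ‖M - P‖ ≤ δ

namespace HasSpectralGap

variable {M P : R} {δ c : ℝ}

theorem nonneg (h : HasSpectralGap M P δ) : 0 ≤ δ :=
  (norm_nonneg _).trans h.norm_sub_proj_le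

theorem proj_mul_sub (h : HasSpectralGap M P δ) : P * (M - P) = 0 := by
  rw [mul_sub, h.proj_mul, h.proj_mul_proj, sub_self]

theorem sub_mul_one_sub (h : HasSpectralGap M P δ) : (M - P) * (1 - P) = M - P := by
  rw [mul_sub, mul_one, sub_mul, h.mul_proj, h.proj_mul_proj, sub_self, sub_zero]

theorem norm_mul_zenoStep_le_one (h : HasSpectralGap M P δ) {w : R} (hw : IsZenoStep P c w) :
    ‖M * w‖ ≤ 1 :=
  norm_mul_le_one h.norm_le_one hw.1

theorem norm_proj_mul_zenoStep_mul_proj_le_one (h : HasSpectralGap M P δ) {w : R}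
    (hw : IsZenoStep P c w) : ‖P * w * P‖ ≤ 1 :=
  norm_mul_le_one (norm_mul_le_one h.norm_proj_le_one hw.1) h.norm_proj_le_one

/-- On the kernel of `P` each step either leaves it through `P w (1 - P)`, at cost `c`, or stays
in it through `(M - P) w`, at cost `δ`. -/
theorem norm_timeOrderedProd_mul_le_of_proj_mul_eq_zero (h : HasSpectralGap M P δ) :
    ∀ {ws : List R}, (∀ w ∈ ws, IsZenoStep P c w) → ∀ {r : R}, P * r = 0 →
      ‖timeOrderedProd (M * ·) ws * r‖ ≤
        (c * ∑ k ∈ range ws.length, δ ^ k + δ ^ ws.length) * ‖r‖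
  | [], _, r, _ => by simp
  | w :: ws, hws, r, hr => by
    obtain ⟨hw, hws⟩ := List.forall_mem_cons.1 hws
    set A := timeOrderedProd (M * ·) ws
    have hsplit : timeOrderedProd (M * ·) (w :: ws) * r =
        A * (P * w * (1 - P) * r) + A * ((M - P) * w * r) := by
      have hr' : (1 - P) * r = r := by rw [sub_mul, one_mul, hr, sub_zero]
      rw [timeOrderedProd_cons, mul_assoc (P * w), hr']
      noncomm_ring
    have hleave : ‖A * (P * w * (1 - P) * r)‖ ≤ c * ‖r‖ :=
      (norm_timeOrderedProd_mul_le (fun v hv => h.norm_mul_zenoStep_le_one (hws v hv)) _).trans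
        (norm_mul_le_of_le hw.2.1 le_rfl)
    have hstay : ‖A * ((M - P) * w * r)‖ ≤
        (c * ∑ k ∈ range ws.length, δ ^ k + δ ^ ws.length) * (δ * ‖r‖) := by
      refine (norm_timeOrderedProd_mul_le_of_proj_mul_eq_zero h hws ?_).trans ?_
      · rw [mul_assoc, ← mul_assoc, h.proj_mul_sub, zero_mul]
      · have hc := hw.nonneg
        have hδ := h.nonneg
        gcongr
        rw [mul_assoc]
        exact (norm_mul_le _ _).trans (mul_le_mul h.norm_sub_proj_le
          (norm_mul_le_of_norm_le_one hw.1 r) (norm_nonneg _) hδ)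
    calc ‖timeOrderedProd (M * ·) (w :: ws) * r‖
        ≤ c * ‖r‖ + (c * ∑ k ∈ range ws.length, δ ^ k + δ ^ ws.length) * (δ * ‖r‖) := by
          rw [hsplit]
          exact (norm_add_le _ _).trans (add_le_add hleave hstay)
      _ = _ := by
          rw [List.length_cons, geom_sum_succ, pow_succ]
          ring

/-- On the range of `P` the two products differ only through excursions into the kernel of `P`,
each entered through `(1 - P) w P` at cost `c δ` and then controlled as above. -/
theorem norm_timeOrderedProd_sub_mul_le_of_proj_mul_eq_self (h : HasSpectralGap M P δ) :
    ∀ {ws : List R}, (∀ w ∈ ws, IsZenoStep P c w) → ∀ {r : R}, P * r = r →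
      ‖(timeOrderedProd (M * ·) ws - timeOrderedProd (fun w => P * w * P) ws) * r‖ ≤
        c * δ * (1 + c * ws.length) * (∑ k ∈ range ws.length, δ ^ k) * ‖r‖
  | [], _, r, _ => by simp
  | w :: ws, hws, r, hr => by
    obtain ⟨hw, hws⟩ := List.forall_mem_cons.1 hws
    set A := timeOrderedProd (M * ·) ws
    set B := timeOrderedProd (fun w => P * w * P) ws
    set S := ∑ k ∈ range ws.length, δ ^ k
    have hc := hw.nonneg
    have hδ := h.nonneg
    have hsplit : (timeOrderedProd (M * ·) (w :: ws) -
        timeOrderedProd (fun w => P * w * P) (w :: ws)) * r =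
          (A - B) * (P * w * P * r) + A * ((M - P) * w * r) := by
      rw [timeOrderedProd_cons, timeOrderedProd_cons, sub_mul, mul_assoc _ (P * w * P) r,
        mul_assoc (P * w) P r, hr]
      simp only [A, B]
      noncomm_ring
    have hexit : (M - P) * w * r = (M - P) * ((1 - P) * w * P * r) := by
      conv_lhs => rw [← hr, ← h.sub_mul_one_sub]
      noncomm_ring
    have hdiag : ‖(A - B) * (P * w * P * r)‖ ≤ c * δ * (1 + c * ws.length) * S * ‖r‖ := by
      refine (norm_timeOrderedProd_sub_mul_le_of_proj_mul_eq_self h hws ?_).trans ?_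
      · simp only [← mul_assoc, h.proj_mul_proj]
      · gcongr
        exact norm_mul_le_of_norm_le_one (h.norm_proj_mul_zenoStep_mul_proj_le_one hw) r
    have hoff : ‖A * ((M - P) * w * r)‖ ≤ (c * S + δ ^ ws.length) * (δ * (c * ‖r‖)) := by
      refine (norm_timeOrderedProd_mul_le_of_proj_mul_eq_zero h hws ?_).trans ?_
      · rw [mul_assoc, ← mul_assoc, h.proj_mul_sub, zero_mul]
      · gcongr
        rw [hexit]
        exact (norm_mul_le _ _).trans (mul_le_mul h.norm_sub_proj_le
          (norm_mul_le_of_le hw.2.2 le_rfl) (norm_nonneg _) hδ)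
    have hgap : 0 ≤ c * δ * (c * (ws.length + 1) * δ ^ ws.length) * ‖r‖ := by positivity
    calc _ ≤ c * δ * (1 + c * ws.length) * S * ‖r‖ +
          (c * S + δ ^ ws.length) * (δ * (c * ‖r‖)) := by
          rw [hsplit]
          exact (norm_add_le _ _).trans (add_le_add hdiag hoff)
      _ ≤ _ := by
          rw [List.length_cons, sum_range_succ]
          push_cast
          linarith

theorem norm_timeOrderedProd_sub_le (h : HasSpectralGap M P δ) {w : R} {ws : List R}
    (hw : IsZenoStep P c w) (hws : ∀ v ∈ ws, IsZenoStep P c v) :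
    ‖timeOrderedProd (M * ·) (w :: ws) - timeOrderedProd (fun w => P * w * P) (w :: ws)‖ ≤
      δ ^ (ws.length + 1) + c +
        c * (2 + c * ws.length) * (δ * ∑ k ∈ range ws.length, δ ^ k) := by
  set A := timeOrderedProd (M * ·) ws
  set B := timeOrderedProd (fun w => P * w * P) ws
  have hsplit : timeOrderedProd (M * ·) (w :: ws) -
      timeOrderedProd (fun w => P * w * P) (w :: ws) =
        (A - B) * (P * w * P) + A * (P * w * (1 - P)) + A * ((M - P) * w) := by
    rw [timeOrderedProd_cons, timeOrderedProd_cons]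
    simp only [A, B]
    noncomm_ring
  have hdiag := h.norm_timeOrderedProd_sub_mul_le_of_proj_mul_eq_self hws
    (r := P * w * P) (by simp only [← mul_assoc, h.proj_mul_proj])
  have hleave : ‖A * (P * w * (1 - P))‖ ≤ c :=
    (norm_timeOrderedProd_mul_le (fun v hv => h.norm_mul_zenoStep_le_one (hws v hv)) _).trans hw.2.1
  have hstay := h.norm_timeOrderedProd_mul_le_of_proj_mul_eq_zero hws (r := (M - P) * w)
    (by rw [← mul_assoc, h.proj_mul_sub, zero_mul])
  have hc := hw.nonneg
  have hδ := h.nonneg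
  calc _ ≤ c * δ * (1 + c * ws.length) * (∑ k ∈ range ws.length, δ ^ k) * 1 + c +
        (c * ∑ k ∈ range ws.length, δ ^ k + δ ^ ws.length) * δ := by
        rw [hsplit]
        refine norm_add₃_le.trans
          (add_le_add (add_le_add (hdiag.trans ?_) hleave) (hstay.trans ?_))
        · gcongr
          exact h.norm_proj_mul_zenoStep_mul_proj_le_one hw
        · gcongr
          exact norm_mul_le_of_le h.norm_sub_proj_le hw.1 |>.trans_eq (mul_one δ)
    _ = _ := by ring

end HasSpectralGap

end SeminormedRing

theorem HasSpectralGap.of_norm_pow_sub_le {R : Type*} [NormedRing R] {M P : R} {δ : ℝ}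
    (hM : ‖M‖ ≤ 1) (hP : P * P = P) (hδ1 : δ < 1) (hMP : ∀ n : ℕ, ‖M ^ n - P‖ ≤ δ ^ n) :
    HasSpectralGap M P δ := by
  have hsub : ‖M - P‖ ≤ δ := by simpa using hMP 1
  have hδ0 : 0 ≤ δ := (norm_nonneg _).trans hsub
  have eq_of_le : ∀ a b : R, (∀ k : ℕ, ‖a - b‖ ≤ 0 + (δ + 1) * δ ^ k) → a = b := fun a b hab =>
    sub_eq_zero.1 (norm_le_zero_iff.1 (le_of_forall_le_add_mul_pow hδ0 hδ1 hab))
  refine ⟨hP, eq_of_le _ _ fun k => ?_, eq_of_le _ _ fun k => ?_, hM, ?_, hsub⟩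
  · calc ‖P * M - P‖ = ‖(M ^ (k + 1) - P) - (M ^ k - P) * M‖ := by
          rw [pow_succ]; congr 1; noncomm_ring
      _ ≤ δ ^ (k + 1) + δ ^ k * 1 :=
          (norm_sub_le _ _).trans (add_le_add (hMP _) (norm_mul_le_of_le (hMP k) hM))
      _ = 0 + (δ + 1) * δ ^ k := by ring
  · calc ‖M * P - P‖ = ‖(M ^ (k + 1) - P) - M * (M ^ k - P)‖ := by
          rw [pow_succ']; congr 1; noncomm_ring
      _ ≤ δ ^ (k + 1) + 1 * δ ^ k :=
          (norm_sub_le _ _).trans (add_le_add (hMP _) (norm_mul_le_of_le hM (hMP k)))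
      _ = 0 + (δ + 1) * δ ^ k := by ring
  · refine le_of_forall_le_add_mul_pow (C := δ) hδ0 hδ1 fun k => ?_
    calc ‖P‖ = ‖M ^ (k + 1) - (M ^ (k + 1) - P)‖ := by rw [sub_sub_cancel]
      _ ≤ ‖M‖ ^ (k + 1) + δ ^ (k + 1) :=
          (norm_sub_le _ _).trans (add_le_add (norm_pow_le' M k.succ_pos) (hMP _))
      _ ≤ 1 + δ * δ ^ k := by
          rw [pow_succ' δ]
          gcongr
          exact pow_le_one₀ (norm_nonneg M) hM

theorem isZenoStep_of_partition {E : Type*} [NormedAddCommGroup E] [NormedSpace ℝ E] {T₀ : ℝ}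
    {P : E →L[ℝ] E} {V : ℝ → ℝ → E →L[ℝ] E} {b : ℝ}
    (hV : IsContractionEvolutionSystem V T₀)
    (hZeno : ∀ t s, 0 ≤ s → s ≤ t → t ≤ T₀ →
      ‖P ∘L V t s ∘L (1 - P)‖ ≤ (t - s) * b ∧ ‖(1 - P) ∘L V t s ∘L P‖ ≤ (t - s) * b)
    {t : ℝ} (ht : t ∈ Icc 0 T₀) {n j : ℕ} (hj1 : 1 ≤ j) (hjn : j ≤ n) :
    IsZenoStep P (t * b / n) (V ((j : ℝ) * t / n) (((j : ℝ) - 1) * t / n)) := by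
  obtain ⟨ht0, htT⟩ := ht
  have hn : (0 : ℝ) < n := by exact_mod_cast hj1.trans hjn
  have hj1' : (1 : ℝ) ≤ j := by exact_mod_cast hj1
  have hjn' : (j : ℝ) ≤ n := by exact_mod_cast hjn
  have hs : 0 ≤ ((j : ℝ) - 1) * t / n := div_nonneg (mul_nonneg (by linarith) ht0) hn.le
  have hst : ((j : ℝ) - 1) * t / n ≤ j * t / n := by gcongr; linarith
  have hsT : (j : ℝ) * t / n ≤ T₀ :=
    calc (j : ℝ) * t / n ≤ n * t / n := by gcongr
      _ = t := by field_simp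
      _ ≤ T₀ := htT
  have hlen : ((j : ℝ) * t / n - ((j : ℝ) - 1) * t / n) * b = t * b / n := by ring
  obtain ⟨hleave, henter⟩ := hZeno _ _ hs hst hsT
  rw [hlen] at hleave henter
  exact ⟨hV.2 _ _ hs hst hsT, by rwa [mul_assoc], by rwa [mul_assoc]⟩

theorem zeno_remainder_le {δ b t : ℝ} (hδ0 : 0 ≤ δ) (hδ1 : δ < 1) (hb : 0 ≤ b) (ht : 0 ≤ t)
    (m : ℕ) :
    t * b / (m + 1 : ℕ) * (2 + t * b / (m + 1 : ℕ) * m) * (δ * ∑ k ∈ range m, δ ^ k) ≤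
      (1 / (m + 1 : ℕ)) * (t * b * (2 + t * b) * (δ - δ ^ (m + 1)) / (1 - δ)) *
        Real.exp (2 * b) := by
  have hn : (0 : ℝ) < (m + 1 : ℕ) := by positivity
  have hgeom : δ * ∑ k ∈ range m, δ ^ k = (δ - δ ^ (m + 1)) / (1 - δ) := by
    rw [geom_sum_eq hδ1.ne, pow_succ]
    field_simp [sub_ne_zero.2 hδ1.ne, sub_ne_zero.2 hδ1.ne']
    ring
  calc _ ≤ t * b / (m + 1 : ℕ) * (2 + t * b / (m + 1 : ℕ) * (m + 1 : ℕ)) *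
        (δ * ∑ k ∈ range m, δ ^ k) := by gcongr; exact_mod_cast m.le_succ
    _ = (1 / (m + 1 : ℕ)) * (t * b * (2 + t * b)) * (δ * ∑ k ∈ range m, δ ^ k) := by
        field_simp
    _ ≤ (1 / (m + 1 : ℕ)) * (t * b * (2 + t * b)) * (δ * ∑ k ∈ range m, δ ^ k) *
        Real.exp (2 * b) := le_mul_of_one_le_right (by positivity) (Real.one_le_exp (by positivity))
    _ = _ := by rw [hgeom]; ring

theorem stmt11_general (T₀ : ℝ)
    (M P : X →L[ℝ] X) (hM : ‖M‖ ≤ 1) (hP : P ∘L P = P)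
    (δ : ℝ) (hδ1 : δ < 1)
    (hMP : ∀ n : ℕ, ‖M ^ n - P‖ ≤ δ ^ n)
    (V : ℝ → ℝ → X →L[ℝ] X) (hV : IsContractionEvolutionSystem V T₀)
    (b : ℝ) (hb : 0 ≤ b)
    (hZeno : ∀ t s, 0 ≤ s → s ≤ t → t ≤ T₀ →
      ‖P ∘L V t s ∘L (1 - P)‖ ≤ (t - s) * b ∧ ‖(1 - P) ∘L V t s ∘L P‖ ≤ (t - s) * b) :
    ∀ (x : X), ∀ t ∈ Icc 0 T₀, ∀ n : ℕ, 1 ≤ n →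
      ‖(((List.range' 1 n).reverse.map (fun j =>
            M ∘L V ((j : ℝ) * t / n) (((j : ℝ) - 1) * t / n))).prod) x -
          (((List.range' 1 n).reverse.map (fun j =>
            P ∘L V ((j : ℝ) * t / n) (((j : ℝ) - 1) * t / n) ∘L P)).prod) x‖ ≤
        (δ ^ n + t * b / n +
            (1 / n) * (t * b * (2 + t * b) * (δ - δ ^ n) / (1 - δ)) * Real.exp (2 * b)) *
          ‖x‖ := by
  have gap := HasSpectralGap.of_norm_pow_sub_le hM hP hδ1 hMP
  intro x t ht n hn
  obtain ⟨m, rfl⟩ := Nat.exists_eq_add_of_le' hn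
  set w : ℕ → X →L[ℝ] X := fun j =>
    V ((j : ℝ) * t / (m + 1 : ℕ)) (((j : ℝ) - 1) * t / (m + 1 : ℕ))
  have hsteps : ∀ v ∈ (List.range' 1 (m + 1)).map w, IsZenoStep P (t * b / (m + 1 : ℕ)) v := by
    refine List.forall_mem_map.2 fun j hj => ?_
    obtain ⟨hj1, hjn⟩ := List.mem_range'_1.1 hj
    exact isZenoStep_of_partition hV hZeno ht hj1 (by omega)
  rw [List.range'_succ, List.map_cons, List.forall_mem_cons] at hsteps
  calc _ = ‖(timeOrderedProd (M * ·) (w 1 :: (List.range' 2 m).map w) -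
        timeOrderedProd (fun v => P * v * P) (w 1 :: (List.range' 2 m).map w)) x‖ := by
        -- the statement's indices are reals: `List.range' 1 n` is cast via the list monad
        simp only [timeOrderedProd, List.pure_def, List.bind_eq_flatMap, ← List.map_eq_flatMap,
          List.map_map, List.map_reverse, List.range'_succ, List.map_cons]
        rfl
    _ ≤ _ := by
      refine (ContinuousLinearMap.le_opNorm _ x).trans
        (mul_le_mul_of_nonneg_right ?_ (norm_nonneg x))
      refine (gap.norm_timeOrderedProd_sub_le hsteps.1 hsteps.2).trans ?_
      simpa using zeno_remainder_le gap.nonneg hδ1 hb ht.1 m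

/-- replacing the contraction `M` by the projection `P` in the Zeno
product: if `‖Mⁿ − P‖ ≤ δⁿ` and the asymptotic Zeno condition holds, then
`‖∏ M V(s_j,s_{j-1}) x − ∏ P V(s_j,s_{j-1}) P x‖
  ≤ (δⁿ + tb/n + (1/n)(tb(2+tb)(δ−δⁿ)/(1−δ)) e^{2b}) ‖x‖`. -/
theorem stmt11 (T₀ : ℝ) (hT₀ : 0 ≤ T₀)
    (M P : X →L[ℝ] X) (hM : ‖M‖ ≤ 1) (hP : P ∘L P = P)
    (δ : ℝ) (hδ0 : 0 < δ) (hδ1 : δ < 1)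
    (hMP : ∀ n : ℕ, ‖M ^ n - P‖ ≤ δ ^ n)
    (V : ℝ → ℝ → X →L[ℝ] X) (hV : IsContractionEvolutionSystem V T₀)
    (b : ℝ) (hb : 0 ≤ b)
    (hZeno : ∀ t s, 0 ≤ s → s ≤ t → t ≤ T₀ →
      ‖P ∘L V t s ∘L (1 - P)‖ ≤ (t - s) * b ∧ ‖(1 - P) ∘L V t s ∘L P‖ ≤ (t - s) * b) :
    ∀ (x : X), ∀ t ∈ Icc 0 T₀, ∀ n : ℕ, 1 ≤ n →
      ‖(((List.range' 1 n).reverse.map (fun j =>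
            M ∘L V ((j : ℝ) * t / n) (((j : ℝ) - 1) * t / n))).prod) x -
          (((List.range' 1 n).reverse.map (fun j =>
            P ∘L V ((j : ℝ) * t / n) (((j : ℝ) - 1) * t / n) ∘L P)).prod) x‖ ≤
        (δ ^ n + t * b / n +
            (1 / n) * (t * b * (2 + t * b) * (δ - δ ^ n) / (1 - δ)) * Real.exp (2 * b)) *
          ‖x‖ :=
  stmt11_general T₀ M P hM hP δ hδ1 hMP V hV b hb hZeno
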